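/- Let A ⊆ B ⊆ Q₁ be Lebesgue-measurable subsets of the unit cube Q₁ in ℝ^d, and let 0 < δ < 1. Assume (a) |A| ≤ δ, and (b) whenever Q is a dyadic subcube of Q₁ with |A ∩ Q| > δ|Q|, its predecessor Q̃ (the dyadic cube of twice the side length containing Q) satisfies Q̃ ⊆ B. Then |A| ≤ δ|B|. -/

import Mathlib

/-!
By the Lebesgue density theorem, applied to the closed sup-norm balls that have the same
measure as the dyadic cubes, almost every `x ∈ A` lies in dyadic cubes `Q` with
`|A ∩ Q| > δ|Q|` of all small enough sizes. The unit cube is not such a cube because `|A| ≤ δ`,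
so the predecessor `Q̃` of the first such cube containing `x` satisfies `Q̃ ⊆ B` and
`|A ∩ Q̃| ≤ δ|Q̃|`. The maximal dyadic cubes with these two properties are pairwise disjoint and
cover almost all of `A`; summing `|A ∩ Q| ≤ δ|Q|` over them gives `|A| ≤ δ|B|`.
-/

open MeasureTheory
open scoped ENNReal

/-- A dyadic subcube of the unit cube `[0,1)^d`: generation `i`, index `j`. -/
def dyadicCube (d i : ℕ) (j : Fin d → ℕ) : Set (Fin d → ℝ) :=
  {x | ∀ l, (j l : ℝ) / 2 ^ i ≤ x l ∧ x l < ((j l : ℝ) + 1) / 2 ^ i}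

open Filter Metric Set
open scoped Topology

theorem measure_inter_biUnion_le_mul {α ι : Type*} [MeasurableSpace α] {μ : Measure α}
    {A : Set α} {I : Set ι} {s : ι → Set α} {c : ℝ≥0∞} (hI : I.Countable)
    (hd : I.PairwiseDisjoint s) (hs : ∀ i ∈ I, MeasurableSet (s i))
    (h : ∀ i ∈ I, μ (A ∩ s i) ≤ c * μ (s i)) :
    μ (A ∩ ⋃ i ∈ I, s i) ≤ c * μ (⋃ i ∈ I, s i) :=
  calc μ (A ∩ ⋃ i ∈ I, s i) = μ (⋃ i ∈ I, A ∩ s i) := by rw [inter_iUnion₂]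
    _ ≤ ∑' i : I, μ (A ∩ s i) := measure_biUnion_le μ hI _
    _ ≤ ∑' i : I, c * μ (s i) := ENNReal.tsum_le_tsum fun i => h i i.2
    _ = c * μ (⋃ i ∈ I, s i) := by rw [ENNReal.tsum_mul_left, measure_biUnion hI hd hs]

theorem mem_Ico_div_iff_floor_mul_eq {a c : ℝ} (hc : 0 < c) (n : ℕ) :
    a ∈ Ico (n / c) ((n + 1) / c) ↔ 0 ≤ a ∧ ⌊a * c⌋₊ = n := by
  rw [mem_Ico, div_le_iff₀ hc, lt_div_iff₀ hc]
  constructor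
  · rintro ⟨hle, hlt⟩
    have h0 : 0 ≤ a * c := (Nat.cast_nonneg n).trans hle
    exact ⟨(mul_nonneg_iff_of_pos_right hc).1 h0, (Nat.floor_eq_iff h0).2 ⟨hle, hlt⟩⟩
  · rintro ⟨ha, rfl⟩
    exact (Nat.floor_eq_iff (by positivity)).1 rfl

section DyadicCube

variable {d : ℕ}

-- `⌊·⌋₊` sends negative coordinates to `0`, so this is meaningful only for `0 ≤ x`.
noncomputable def dyadicIndex (i : ℕ) (x : Fin d → ℝ) : Fin d → ℕ :=
  fun l => ⌊x l * 2 ^ i⌋₊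

noncomputable def dyadicCenter (i : ℕ) (j : Fin d → ℕ) : Fin d → ℝ :=
  fun l => (j l + 2⁻¹) / 2 ^ i

theorem dyadicCube_eq_pi (i : ℕ) (j : Fin d → ℕ) :
    dyadicCube d i j = univ.pi fun l => Ico ((j l : ℝ) / 2 ^ i) ((j l + 1) / 2 ^ i) := by
  ext x
  simp [dyadicCube]

theorem mem_dyadicCube_iff {i : ℕ} {j : Fin d → ℕ} {x : Fin d → ℝ} :
    x ∈ dyadicCube d i j ↔ 0 ≤ x ∧ dyadicIndex i x = j := by
  simp only [dyadicCube_eq_pi, mem_univ_pi,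
    mem_Ico_div_iff_floor_mul_eq (by positivity : (0 : ℝ) < 2 ^ i), forall_and, Pi.le_def,
    funext_iff, dyadicIndex, Pi.zero_apply]

theorem mem_dyadicCube_dyadicIndex {i : ℕ} {x : Fin d → ℝ} (hx : 0 ≤ x) :
    x ∈ dyadicCube d i (dyadicIndex i x) :=
  mem_dyadicCube_iff.2 ⟨hx, rfl⟩

theorem measurableSet_dyadicCube (i : ℕ) (j : Fin d → ℕ) :
    MeasurableSet (dyadicCube d i j) := by
  rw [dyadicCube_eq_pi]
  exact .univ_pi fun _ => measurableSet_Ico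

theorem volume_dyadicCube (i : ℕ) (j : Fin d → ℕ) :
    volume (dyadicCube d i j) = ENNReal.ofReal (((2 : ℝ) ^ i)⁻¹ ^ d) := by
  simp_rw [dyadicCube_eq_pi, Real.volume_pi_Ico, ← sub_div, add_sub_cancel_left, one_div,
    Finset.prod_const, Finset.card_univ, Fintype.card_fin,
    ENNReal.ofReal_pow (by positivity : (0 : ℝ) ≤ (2 ^ i)⁻¹)]

theorem dyadicIndex_eq_div_two_pow (i k : ℕ) (x : Fin d → ℝ) :
    dyadicIndex i x = fun l => dyadicIndex (i + k) x l / 2 ^ k := by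
  funext l
  rw [dyadicIndex, dyadicIndex, ← Nat.floor_div_natCast, pow_add]
  push_cast
  rw [mul_div_assoc, mul_div_cancel_right₀ _ (by positivity)]

theorem dyadicIndex_lt_two_pow {x : Fin d → ℝ} (hx : x ∈ dyadicCube d 0 0) (i : ℕ)
    (l : Fin d) : dyadicIndex i x l < 2 ^ i := by
  have hxl := hx l
  simp only [Pi.zero_apply, CharP.cast_eq_zero, pow_zero, div_one, zero_add] at hxl
  rw [dyadicIndex, Nat.floor_lt (mul_nonneg hxl.1 (by positivity))]
  push_cast
  nlinarith [pow_pos (two_pos : (0 : ℝ) < 2) i]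

theorem dyadicCube_subset_of_le {i i' : ℕ} (h : i ≤ i') {j j' : Fin d → ℕ} {x : Fin d → ℝ}
    (hx : x ∈ dyadicCube d i j) (hx' : x ∈ dyadicCube d i' j') :
    dyadicCube d i' j' ⊆ dyadicCube d i j := by
  obtain ⟨k, rfl⟩ := Nat.exists_eq_add_of_le h
  rw [mem_dyadicCube_iff] at hx hx'
  intro y hy
  rw [mem_dyadicCube_iff] at hy ⊢
  rw [dyadicIndex_eq_div_two_pow i k, hy.2, ← hx'.2, ← dyadicIndex_eq_div_two_pow, hx.2]
  exact ⟨hy.1, rfl⟩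

theorem exists_pairwiseDisjoint_dyadicCube_cover (P : ℕ → (Fin d → ℕ) → Prop) :
    ∃ M : Set (ℕ × (Fin d → ℕ)), (∀ p ∈ M, P p.1 p.2) ∧
      M.PairwiseDisjoint (fun p => dyadicCube d p.1 p.2) ∧
      ∀ i j, P i j → dyadicCube d i j ⊆ ⋃ p ∈ M, dyadicCube d p.1 p.2 := by
  classical
  refine ⟨{p | P p.1 p.2 ∧ ∀ q : ℕ × (Fin d → ℕ), P q.1 q.2 →
    dyadicCube d p.1 p.2 ⊆ dyadicCube d q.1 q.2 → p.1 ≤ q.1}, fun p hp => hp.1, ?_, ?_⟩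
  · rintro ⟨i, j⟩ hp ⟨i', j'⟩ hq hne
    refine disjoint_left.2 fun x hx hx' => hne ?_
    wlog h : i ≤ i' generalizing i j i' j'
    · exact (this i' j' hq i j hp (Ne.symm hne) hx' hx (le_of_not_ge h)).symm
    have hi : i = i' := h.antisymm (hq.2 _ hp.1 (dyadicCube_subset_of_le h hx hx'))
    subst hi
    have hj : dyadicIndex i x = j := (mem_dyadicCube_iff.1 hx).2
    have hj' : dyadicIndex i x = j' := (mem_dyadicCube_iff.1 hx').2
    rw [← hj, ← hj']
  · intro i j hP x hx
    obtain ⟨hx0, hj⟩ := mem_dyadicCube_iff.1 hx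
    have hex : ∃ k, P k (dyadicIndex k x) := ⟨i, hj ▸ hP⟩
    refine mem_biUnion (x := (Nat.find hex, dyadicIndex (Nat.find hex) x))
      ⟨Nat.find_spec hex, ?_⟩ (mem_dyadicCube_dyadicIndex hx0)
    rintro ⟨k, j'⟩ hq hsub
    obtain ⟨-, hj'⟩ := mem_dyadicCube_iff.1 (hsub (mem_dyadicCube_dyadicIndex hx0))
    exact Nat.find_min' hex (hj' ▸ hq)

theorem dyadicCube_subset_closedBall (i : ℕ) (j : Fin d → ℕ) :
    dyadicCube d i j ⊆ closedBall (dyadicCenter i j) (((2 : ℝ) ^ i)⁻¹ / 2) := by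
  intro y hy
  rw [mem_closedBall, dist_pi_le_iff (by positivity)]
  intro l
  obtain ⟨h1, h2⟩ := hy l
  have hc : dyadicCenter i j l = j l / 2 ^ i + ((2 : ℝ) ^ i)⁻¹ / 2 := by
    simp only [dyadicCenter]; field_simp
  have hr : ((j l : ℝ) + 1) / 2 ^ i = j l / 2 ^ i + ((2 : ℝ) ^ i)⁻¹ := by
    field_simp
  rw [Real.dist_eq, abs_sub_le_iff]
  constructor <;> linarith

theorem dyadicCube_ae_eq_closedBall (i : ℕ) (j : Fin d → ℕ) :
    dyadicCube d i j =ᵐ[volume] closedBall (dyadicCenter i j) (((2 : ℝ) ^ i)⁻¹ / 2) := by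
  refine ae_eq_of_subset_of_measure_ge (dyadicCube_subset_closedBall i j) ?_
    (measurableSet_dyadicCube i j).nullMeasurableSet measure_closedBall_lt_top.ne
  rw [Real.volume_pi_closedBall _ (by positivity), volume_dyadicCube, Fintype.card_fin,
    mul_div_cancel₀ _ two_ne_zero]

theorem ae_tendsto_measure_inter_dyadicCube_div (S : Set (Fin d → ℝ)) :
    ∀ᵐ x ∂volume.restrict S, 0 ≤ x →
      Tendsto (fun i => volume (S ∩ dyadicCube d i (dyadicIndex i x)) /
        volume (dyadicCube d i (dyadicIndex i x))) atTop (𝓝 1) := by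
  filter_upwards [IsUnifLocDoublingMeasure.ae_tendsto_measure_inter_div volume S 1]
    with x hx hx0
  have hr : Tendsto (fun i : ℕ => ((2 : ℝ) ^ i)⁻¹ / 2) atTop (𝓝[>] 0) := by
    refine tendsto_nhdsWithin_iff.2 ⟨?_, .of_forall fun i => mem_Ioi.2 (by positivity)⟩
    simpa using (tendsto_inv_atTop_zero.comp
      (tendsto_pow_atTop_atTop_of_one_lt one_lt_two)).div_const (2 : ℝ)
  refine (hx (fun i => dyadicCenter i (dyadicIndex i x)) _ hr (.of_forall fun i => ?_)).congr
    fun i => ?_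
  · rw [one_mul]
    exact dyadicCube_subset_closedBall _ _ (mem_dyadicCube_dyadicIndex hx0)
  · rw [measure_congr (dyadicCube_ae_eq_closedBall i _),
      measure_congr ((ae_eq_refl S).inter (dyadicCube_ae_eq_closedBall i _))]

theorem ae_exists_lt_measure_inter_dyadicCube (S : Set (Fin d → ℝ)) {c : ℝ≥0∞} (hc : c < 1) :
    ∀ᵐ x ∂volume.restrict S, 0 ≤ x → ∃ i, c * volume (dyadicCube d i (dyadicIndex i x)) <
      volume (S ∩ dyadicCube d i (dyadicIndex i x)) := by
  filter_upwards [ae_tendsto_measure_inter_dyadicCube_div S] with x hx hx0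
  obtain ⟨i, hi⟩ := ((hx hx0).eventually (lt_mem_nhds hc)).exists
  have hpos : volume (dyadicCube d i (dyadicIndex i x)) ≠ 0 := by
    rw [volume_dyadicCube]; exact (ENNReal.ofReal_pos.2 (by positivity)).ne'
  have hfin : volume (dyadicCube d i (dyadicIndex i x)) ≠ ∞ := by
    rw [volume_dyadicCube]; exact ENNReal.ofReal_ne_top
  exact ⟨i, (ENNReal.lt_div_iff_mul_lt (.inl hpos) (.inl hfin)).1 hi⟩

theorem exists_dyadicCube_subset_and_measure_inter_le {A B : Set (Fin d → ℝ)} {c : ℝ≥0∞}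
    (hA : volume A ≤ c)
    (hCZ : ∀ (i : ℕ) (j : Fin d → ℕ), (∀ l, j l < 2 ^ (i + 1)) →
      c * volume (dyadicCube d (i + 1) j) < volume (A ∩ dyadicCube d (i + 1) j) →
      dyadicCube d i (fun l => j l / 2) ⊆ B)
    {x : Fin d → ℝ} (hx : x ∈ dyadicCube d 0 0)
    (hbad : ∃ i, c * volume (dyadicCube d i (dyadicIndex i x)) <
      volume (A ∩ dyadicCube d i (dyadicIndex i x))) :
    ∃ n, dyadicCube d n (dyadicIndex n x) ⊆ B ∧
      volume (A ∩ dyadicCube d n (dyadicIndex n x)) ≤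
        c * volume (dyadicCube d n (dyadicIndex n x)) := by
  have hbad₀ : ¬ c * volume (dyadicCube d 0 (dyadicIndex 0 x)) <
      volume (A ∩ dyadicCube d 0 (dyadicIndex 0 x)) := by
    rw [volume_dyadicCube]
    simpa using (measure_mono inter_subset_left).trans hA
  obtain ⟨n, hn_good, hn_bad⟩ := Nat.exists_not_and_succ_of_not_zero_of_exists hbad₀ hbad
  refine ⟨n, ?_, not_lt.1 hn_good⟩
  rw [dyadicIndex_eq_div_two_pow n 1 x]
  simpa only [pow_one] using hCZ n _ (dyadicIndex_lt_two_pow hx (n + 1)) hn_bad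

end DyadicCube

/-- The predecessor of the dyadic cube of generation `i+1` and index `j` is the cube of
generation `i` and index `fun l => j l / 2`. -/
theorem calderon_zygmund_decomposition_general (d : ℕ) (δ : ℝ) (hδ₁ : δ < 1)
    (A B : Set (Fin d → ℝ)) (hAB : A ⊆ B) (hBQ : B ⊆ dyadicCube d 0 0)
    (hA : volume A ≤ ENNReal.ofReal δ)
    (hCZ : ∀ (i : ℕ) (j : Fin d → ℕ), (∀ l, j l < 2 ^ (i + 1)) →
      ENNReal.ofReal δ * volume (dyadicCube d (i + 1) j) <
        volume (A ∩ dyadicCube d (i + 1) j) →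
      dyadicCube d i (fun l => j l / 2) ⊆ B) :
    volume A ≤ ENNReal.ofReal δ * volume B := by
  obtain ⟨M, hM, hMdisj, hMcover⟩ := exists_pairwiseDisjoint_dyadicCube_cover fun i j =>
    dyadicCube d i j ⊆ B ∧
      volume (A ∩ dyadicCube d i j) ≤ ENNReal.ofReal δ * volume (dyadicCube d i j)
  set U := ⋃ p ∈ M, dyadicCube d p.1 p.2
  have hU : MeasurableSet U := .biUnion M.to_countable fun p _ => measurableSet_dyadicCube _ _
  have hAU : ∀ᵐ x ∂volume.restrict A, x ∈ U := by
    filter_upwards [ae_restrict_of_ae_restrict_of_subset (hAB.trans hBQ)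
        (ae_restrict_mem (measurableSet_dyadicCube 0 0)),
      ae_exists_lt_measure_inter_dyadicCube A (ENNReal.ofReal_lt_one.2 hδ₁)] with x hxQ hx
    have hx0 : 0 ≤ x := (mem_dyadicCube_iff.1 hxQ).1
    obtain ⟨n, hn⟩ := exists_dyadicCube_subset_and_measure_inter_le hA hCZ hxQ (hx hx0)
    exact hMcover n _ hn (mem_dyadicCube_dyadicIndex hx0)
  have hAU_null : volume (A \ U) = 0 := by
    rw [sdiff_eq, inter_comm, ← Measure.restrict_apply hU.compl]
    exact ae_iff.1 hAU
  calc volume A ≤ volume (A ∩ U) + volume (A \ U) := measure_le_inter_add_sdiff _ _ _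
    _ = volume (A ∩ U) := by rw [hAU_null, add_zero]
    _ ≤ ENNReal.ofReal δ * volume U := measure_inter_biUnion_le_mul M.to_countable hMdisj
      (fun p _ => measurableSet_dyadicCube _ _) fun p hp => (hM p hp).2
    _ ≤ ENNReal.ofReal δ * volume B := by
      gcongr
      exact iUnion₂_subset fun p hp => (hM p hp).1

/-- the Calderón–Zygmund decomposition lemma.  The predecessor of the
dyadic cube of generation `i+1` and index `j` is the cube of generation `i` and
index `fun l => j l / 2`. -/
theorem calderon_zygmund_decomposition (d : ℕ) (δ : ℝ) (hδ₀ : 0 < δ) (hδ₁ : δ < 1)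
    (A B : Set (Fin d → ℝ)) (hAB : A ⊆ B) (hBQ : B ⊆ dyadicCube d 0 0)
    (hAm : MeasurableSet A) (hBm : MeasurableSet B)
    (hA : volume A ≤ ENNReal.ofReal δ)
    (hCZ : ∀ (i : ℕ) (j : Fin d → ℕ), (∀ l, j l < 2 ^ (i + 1)) →
      ENNReal.ofReal δ * volume (dyadicCube d (i + 1) j) <
        volume (A ∩ dyadicCube d (i + 1) j) →
      dyadicCube d i (fun l => j l / 2) ⊆ B) :
    volume A ≤ ENNReal.ofReal δ * volume B :=
  calderon_zygmund_decomposition_general d δ hδ₁ A B hAB hBQ hA hCZ
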